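/- Suppose λ, λ_n, λ'_n are nonnegative real numbers, not all three zero, and λ₀, λ₁, …, λ_{n−1} are nonzero complex numbers. Then f has no degenerate critical point (y, x₁, …, x_n) with λ₀y, λ₁x₁, …, λ_{n−1}x_{n−1} and x_n all positive real: at every point where all n+1 partial derivatives of f vanish and λ₀y ∈ ℝ_{>0}, λ_i x_i ∈ ℝ_{>0} for i = 1,…,n−1, and x_n ∈ ℝ_{>0}, the Hessian matrix of second partial derivatives of f is invertible. -/

import Mathlib

open MvPolynomial

/-- The deformed Brieskorn–Pham polynomial
`f = y³ − 3λ₀y + Σ_{i=1}^{n−1} (x_i^{3d} − 3d·λ_i·x_i) + x_n^{3d} − 3d·λ_n·x_n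
− (3d/(3d−1))·λ'_n·x_n^{3d−1} − 3λ·(λ₀·y·x_n^{2d} + d·Σ_{i=1}^{n−1} λ_i·x_i·x_n^{3d−1})`,
with `n = m+1`, in the variables `y` (variable `0`), `x_i` (variable `i` for
`1 ≤ i ≤ m`) and `x_n` (the last variable). -/
noncomputable def asympPoly (m d : ℕ) (l l0 : ℂ) (li : Fin m → ℂ) (ln ln' : ℂ) :
    MvPolynomial (Fin (m + 2)) ℂ :=
  X 0 ^ 3 - C (3 * l0) * X 0
    + ∑ i : Fin m,
        (X i.succ.castSucc ^ (3 * d) - C (3 * (d : ℂ) * li i) * X i.succ.castSucc)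
    + X (Fin.last (m + 1)) ^ (3 * d) - C (3 * (d : ℂ) * ln) * X (Fin.last (m + 1))
    - C ((3 * (d : ℂ)) / (3 * (d : ℂ) - 1) * ln') * X (Fin.last (m + 1)) ^ (3 * d - 1)
    - C (3 * l) * (C l0 * X 0 * X (Fin.last (m + 1)) ^ (2 * d)
        + C (d : ℂ) * ∑ i : Fin m,
            C (li i) * X i.succ.castSucc * X (Fin.last (m + 1)) ^ (3 * d - 1))

/-- `z` is a positive real number. -/
def IsPosReal (z : ℂ) : Prop := ∃ r : ℝ, 0 < r ∧ z = r

/-- `z` is a nonnegative real number. -/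
def IsNonnegReal (z : ℂ) : Prop := ∃ r : ℝ, 0 ≤ r ∧ z = r

/-!
The Hessian `H` of `f` is an arrowhead matrix: besides its diagonal, only the row and the column
of the last variable `x_n` are nonzero. Such a matrix is invertible as soon as its diagonal entries
off the hub and the Schur complement `H_nn - Σ_j H_nj H_jn / H_jj` are nonzero. At a critical point
the equations `y² = λ₀ (1 + λ x_n^{2d})` and `x_i^{3d-1} = λ_i (1 + λ x_n^{3d-1})` turn the terms
`H_nj H_jn / H_jj` into multiples of `λ₀ y` and `λ_i x_i`, and the equation `∂f/∂x_n = 0` then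
rewrites `x_n` times the Schur complement as a sum of nonnegative terms, one of which is positive
when `λ, λ_n, λ'_n` are nonnegative reals, not all zero.
-/

open Finset

theorem Derivation.map_ofNat {R A M : Type*} [CommSemiring R] [CommSemiring A] [AddCommMonoid M]
    [Algebra R A] [Module A M] [Module R M] (D : Derivation R A M) (n : ℕ) [n.AtLeastTwo] :
    D (no_index (OfNat.ofNat n : A)) = 0 :=
  D.map_natCast n

namespace MvPolynomial

theorem pderiv_comm {R σ : Type*} [CommSemiring R] (i j : σ) (p : MvPolynomial σ R) :
    pderiv i (pderiv j p) = pderiv j (pderiv i p) := by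
  classical
  have hX (a b k : σ) : pderiv a (pderiv b (X k : MvPolynomial σ R)) = 0 := by
    rw [pderiv_X, Pi.single_apply]
    split_ifs <;> simp
  induction p using MvPolynomial.induction_on with
  | C a => simp
  | add p q hp hq => simp [hp, hq]
  | mul_X p k hp =>
    simp only [pderiv_mul, map_add, hp, hX, mul_zero, add_zero]
    ring

noncomputable def hessian {R σ : Type*} [CommSemiring R] (p : MvPolynomial σ R) (w : σ → R) :
    Matrix σ σ R :=
  Matrix.of fun j k => eval w (pderiv j (pderiv k p))

end MvPolynomial

namespace Matrix

variable {K : Type*} [Field K] {n : ℕ}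

def arrowheadSchur (M : Matrix (Fin (n + 1)) (Fin (n + 1)) K) : K :=
  M (Fin.last n) (Fin.last n) - ∑ i : Fin n,
    M (Fin.last n) i.castSucc * M i.castSucc (Fin.last n) / M i.castSucc i.castSucc

theorem isUnit_of_arrowhead {M : Matrix (Fin (n + 1)) (Fin (n + 1)) K}
    (hoff : ∀ i j : Fin n, i ≠ j → M i.castSucc j.castSucc = 0)
    (hdiag : ∀ i : Fin n, M i.castSucc i.castSucc ≠ 0) (hschur : M.arrowheadSchur ≠ 0) :
    IsUnit M := by
  rw [isUnit_iff_isUnit_det, isUnit_iff_ne_zero, Ne, ← exists_mulVec_eq_zero_iff]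
  rintro ⟨v, hv, hMv⟩
  have hrow (k : Fin (n + 1)) :
      ∑ i : Fin n, M k i.castSucc * v i.castSucc + M k (Fin.last n) * v (Fin.last n) = 0 := by
    simpa [mulVec, dotProduct, Fin.sum_univ_castSucc] using congrFun hMv k
  have hv_castSucc (i : Fin n) : v i.castSucc =
      -(M i.castSucc (Fin.last n) / M i.castSucc i.castSucc) * v (Fin.last n) := by
    have := hrow i.castSucc
    rw [sum_eq_single i (fun j _ hji => by rw [hoff i j hji.symm, zero_mul]) (by simp)] at this
    field_simp [hdiag i]
    linear_combination this
  have hv_last : v (Fin.last n) = 0 := by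
    refine (mul_eq_zero.mp ?_).resolve_left hschur
    have hsum : ∑ i : Fin n, M (Fin.last n) i.castSucc * v i.castSucc = -(∑ i : Fin n,
        M (Fin.last n) i.castSucc * M i.castSucc (Fin.last n) / M i.castSucc i.castSucc) *
          v (Fin.last n) := by
      rw [neg_mul, sum_mul, ← sum_neg_distrib]
      exact sum_congr rfl fun i _ => by rw [hv_castSucc]; ring
    rw [arrowheadSchur]
    linear_combination hrow (Fin.last n) - hsum
  refine hv (funext fun k => Fin.lastCases hv_last (fun i => ?_) k)
  rw [hv_castSucc, hv_last, mul_zero, Pi.zero_apply]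

end Matrix

theorem three_mul_sub_one_ne_zero {K : Type*} [Field K] [CharZero K] {d : ℕ} (hd : 1 ≤ d) :
    (3 * d - 1 : K) ≠ 0 := by
  have h : ((3 * d - 1 : ℕ) : K) ≠ 0 := by exact_mod_cast (by omega : 3 * d - 1 ≠ 0)
  rwa [Nat.cast_sub (by omega), Nat.cast_mul, Nat.cast_ofNat, Nat.cast_one] at h

-- `x_n` times the Schur complement of the Hessian at a critical point, where `a = λ₀ y` and
-- `S = Σ λ_i x_i`.
def asympSchur {K : Type*} [Field K] (d : ℕ) (l ln ln' s a S : K) : K :=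
  3 * d * (3 * d - 1) * ln + 3 * d * ln' * s ^ (3 * d - 2)
    + 6 * l * d ^ 2 * a * s ^ (2 * d - 1) / (1 + l * s ^ (2 * d))
    + 3 * l * d * (3 * d - 1) * S * s ^ (3 * d - 2) / (1 + l * s ^ (3 * d - 1))

theorem mul_eq_asympSchur {K : Type*} [Field K] {d : ℕ} (hd : 1 ≤ d) {l ln ln' s a S : K}
    (hP : 1 + l * s ^ (2 * d) ≠ 0) (hQ : 1 + l * s ^ (3 * d - 1) ≠ 0)
    (hs : s ^ (3 * d - 1) = ln + ln' * s ^ (3 * d - 2)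
      + l * (2 * a * s ^ (2 * d - 1) + (3 * d - 1) * S * s ^ (3 * d - 2))) :
    (3 * d * ((3 * d - 1) * s ^ (3 * d - 2) - (3 * d - 2) * ln' * s ^ (3 * d - 3)
        - l * (2 * (2 * d - 1) * a * s ^ (2 * d - 2)
          + (3 * d - 1) * (3 * d - 2) * S * s ^ (3 * d - 3)))
      - 6 * l ^ 2 * d ^ 2 * (s ^ (2 * d - 1)) ^ 2 * a / (1 + l * s ^ (2 * d))
      - 3 * l ^ 2 * d * (3 * d - 1) * (s ^ (3 * d - 2)) ^ 2 * S / (1 + l * s ^ (3 * d - 1))) * s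
      = asympSchur d l ln ln' s a S := by
  have q1 : s ^ (3 * d - 2) = s ^ (3 * d - 3) * s := by rw [← pow_succ]; congr 1; omega
  have q2 : s ^ (3 * d - 1) = s ^ (3 * d - 3) * s ^ 2 := by rw [← pow_add]; congr 1; omega
  have q3 : s ^ (2 * d - 1) = s ^ (2 * d - 2) * s := by rw [← pow_succ]; congr 1; omega
  have q4 : s ^ (2 * d) = s ^ (2 * d - 2) * s ^ 2 := by rw [← pow_add]; congr 1; omega
  rw [asympSchur]
  simp only [q1, q2, q3, q4] at hs hP hQ ⊢
  linear_combination 3 * d * (3 * d - 1) * hs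
    - 6 * l * d ^ 2 * a * s ^ (2 * d - 2) * s * div_self hP
    - 3 * l * d * (3 * d - 1) * S * s ^ (3 * d - 3) * s * div_self hQ

theorem asympSchur_pos {d : ℕ} (hd : 1 ≤ d) {l ln ln' s a S : ℝ} (hl : 0 ≤ l) (hln : 0 ≤ ln)
    (hln' : 0 ≤ ln') (hne : ¬(l = 0 ∧ ln = 0 ∧ ln' = 0)) (hs : 0 < s) (ha : 0 < a) (hS : 0 ≤ S) :
    0 < asympSchur d l ln ln' s a S := by
  have hd1 : (1 : ℝ) ≤ d := by exact_mod_cast hd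
  have hd3 : (0 : ℝ) < 3 * d - 1 := by linarith
  have hd0 : (0 : ℝ) < d := by linarith
  have h1 : 0 ≤ 3 * d * (3 * d - 1) * ln := by positivity
  have h2 : 0 ≤ 3 * d * ln' * s ^ (3 * d - 2) := by positivity
  have h3 : 0 ≤ 6 * l * d ^ 2 * a * s ^ (2 * d - 1) / (1 + l * s ^ (2 * d)) := by positivity
  have h4 : 0 ≤ 3 * l * d * (3 * d - 1) * S * s ^ (3 * d - 2) / (1 + l * s ^ (3 * d - 1)) := by
    positivity
  rw [asympSchur]
  rcases hl.lt_or_eq with hl | rfl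
  · have : 0 < 6 * l * d ^ 2 * a * s ^ (2 * d - 1) / (1 + l * s ^ (2 * d)) := by positivity
    linarith
  rcases hln.lt_or_eq with hln | rfl
  · have : 0 < 3 * d * (3 * d - 1) * ln := by positivity
    linarith
  rcases hln'.lt_or_eq with hln' | rfl
  · have : 0 < 3 * d * ln' * s ^ (3 * d - 2) := by positivity
    linarith
  exact absurd ⟨rfl, rfl, rfl⟩ hne

section asympPoly

variable {m d : ℕ} {l l0 : ℂ} {li : Fin m → ℂ} {ln ln' : ℂ} {w : Fin (m + 2) → ℂ}

theorem eval_pderiv_zero_asympPoly : eval w (pderiv 0 (asympPoly m d l l0 li ln ln')) =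
    3 * (w 0 ^ 2 - l0 * (1 + l * w (Fin.last (m + 1)) ^ (2 * d))) := by
  simp [asympPoly, pderiv_X]
  ring

theorem eval_pderiv_succ_castSucc_asympPoly (i : Fin m) :
    eval w (pderiv i.succ.castSucc (asympPoly m d l l0 li ln ln')) =
      3 * d * (w i.succ.castSucc ^ (3 * d - 1)
        - li i * (1 + l * w (Fin.last (m + 1)) ^ (3 * d - 1))) := by
  simp [asympPoly, pderiv_X, Pi.single_apply]
  ring

theorem eval_pderiv_last_asympPoly (hd : 1 ≤ d) :
    eval w (pderiv (Fin.last (m + 1)) (asympPoly m d l l0 li ln ln')) =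
      3 * d * (w (Fin.last (m + 1)) ^ (3 * d - 1) - ln - ln' * w (Fin.last (m + 1)) ^ (3 * d - 2)
        - l * (2 * (l0 * w 0) * w (Fin.last (m + 1)) ^ (2 * d - 1)
          + (3 * d - 1) * (∑ i, li i * w i.succ.castSucc)
            * w (Fin.last (m + 1)) ^ (3 * d - 2))) := by
  have h3d : (3 * d - 1 : ℂ) ≠ 0 := three_mul_sub_one_ne_zero hd
  simp [asympPoly, pderiv_X, Nat.cast_sub (by omega : 1 ≤ 3 * d),
    show 3 * d - 1 - 1 = 3 * d - 2 by omega]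
  rw [← sum_mul]
  field_simp

theorem eval_pderiv_zero_pderiv_zero_asympPoly :
    eval w (pderiv 0 (pderiv 0 (asympPoly m d l l0 li ln ln'))) = 6 * w 0 := by
  simp [asympPoly, pderiv_X, Derivation.map_ofNat]
  ring

theorem eval_pderiv_succ_castSucc_pderiv_zero_asympPoly (i : Fin m) :
    eval w (pderiv i.succ.castSucc (pderiv 0 (asympPoly m d l l0 li ln ln'))) = 0 := by
  simp [asympPoly, pderiv_X, Derivation.map_ofNat]

theorem eval_pderiv_last_pderiv_zero_asympPoly :
    eval w (pderiv (Fin.last (m + 1)) (pderiv 0 (asympPoly m d l l0 li ln ln'))) =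
      -6 * l * d * l0 * w (Fin.last (m + 1)) ^ (2 * d - 1) := by
  simp [asympPoly, pderiv_X, Derivation.map_ofNat]
  ring

theorem eval_pderiv_succ_castSucc_pderiv_succ_castSucc_asympPoly (hd : 1 ≤ d) (i j : Fin m) :
    eval w (pderiv i.succ.castSucc (pderiv j.succ.castSucc (asympPoly m d l l0 li ln ln'))) =
      if i = j then 3 * d * (3 * d - 1) * w i.succ.castSucc ^ (3 * d - 2) else 0 := by
  simp [asympPoly, pderiv_X, Pi.single_apply, Derivation.map_ofNat,
    Nat.cast_sub (by omega : 1 ≤ 3 * d), show 3 * d - 1 - 1 = 3 * d - 2 by omega,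
    eq_comm (a := j)]
  split_ifs with h
  · subst h
    simp
    ring
  · simp

theorem eval_pderiv_last_pderiv_succ_castSucc_asympPoly (hd : 1 ≤ d) (i : Fin m) :
    eval w (pderiv (Fin.last (m + 1)) (pderiv i.succ.castSucc (asympPoly m d l l0 li ln ln'))) =
      -3 * l * d * (3 * d - 1) * li i * w (Fin.last (m + 1)) ^ (3 * d - 2) := by
  simp [asympPoly, pderiv_X, Pi.single_apply, Derivation.map_ofNat,
    Nat.cast_sub (by omega : 1 ≤ 3 * d), show 3 * d - 1 - 1 = 3 * d - 2 by omega]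
  ring

theorem eval_pderiv_last_pderiv_last_asympPoly (hd : 1 ≤ d) :
    eval w (pderiv (Fin.last (m + 1)) (pderiv (Fin.last (m + 1)) (asympPoly m d l l0 li ln ln'))) =
      3 * d * ((3 * d - 1) * w (Fin.last (m + 1)) ^ (3 * d - 2)
        - (3 * d - 2) * ln' * w (Fin.last (m + 1)) ^ (3 * d - 3)
        - l * (2 * (2 * d - 1) * (l0 * w 0) * w (Fin.last (m + 1)) ^ (2 * d - 2)
          + (3 * d - 1) * (3 * d - 2) * (∑ i, li i * w i.succ.castSucc)
            * w (Fin.last (m + 1)) ^ (3 * d - 3))) := by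
  have h3d : (3 * d - 1 : ℂ) ≠ 0 := three_mul_sub_one_ne_zero hd
  simp [asympPoly, pderiv_X, Derivation.map_ofNat, Nat.cast_sub (by omega : 1 ≤ 3 * d),
    Nat.cast_sub (by omega : 1 ≤ 2 * d), Nat.cast_sub (by omega : 2 ≤ 3 * d),
    show 3 * d - 1 - 1 = 3 * d - 2 by omega, show 3 * d - 2 - 1 = 3 * d - 3 by omega,
    show 2 * d - 1 - 1 = 2 * d - 2 by omega]
  rw [← sum_mul]
  field_simp

theorem hessian_asympPoly_castSucc_castSucc_of_ne (hd : 1 ≤ d) (j k : Fin (m + 1)) (hjk : j ≠ k) :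
    hessian (asympPoly m d l l0 li ln ln') w j.castSucc k.castSucc = 0 := by
  simp only [hessian, Matrix.of_apply]
  cases j using Fin.cases with
  | zero =>
    cases k using Fin.cases with
    | zero => exact absurd rfl hjk
    | succ k =>
      rw [Fin.castSucc_zero, pderiv_comm, eval_pderiv_succ_castSucc_pderiv_zero_asympPoly]
  | succ j =>
    cases k using Fin.cases with
    | zero => exact eval_pderiv_succ_castSucc_pderiv_zero_asympPoly j
    | succ k =>
      rw [eval_pderiv_succ_castSucc_pderiv_succ_castSucc_asympPoly hd,
        if_neg fun h => hjk (congrArg Fin.succ h)]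

theorem hessian_asympPoly_castSucc_self_ne_zero (hd : 1 ≤ d) {j : Fin (m + 1)}
    (hj : w j.castSucc ≠ 0) :
    hessian (asympPoly m d l l0 li ln ln') w j.castSucc j.castSucc ≠ 0 := by
  simp only [hessian, Matrix.of_apply]
  cases j using Fin.cases with
  | zero => simpa [eval_pderiv_zero_pderiv_zero_asympPoly] using hj
  | succ i =>
    rw [eval_pderiv_succ_castSucc_pderiv_succ_castSucc_asympPoly hd, if_pos rfl]
    have hd0 : (d : ℂ) ≠ 0 := by exact_mod_cast (by omega : d ≠ 0)
    exact mul_ne_zero (mul_ne_zero (mul_ne_zero three_ne_zero hd0)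
      (three_mul_sub_one_ne_zero hd)) (pow_ne_zero _ hj)

theorem sq_eq_of_eval_pderiv_zero_asympPoly
    (h : eval w (pderiv 0 (asympPoly m d l l0 li ln ln')) = 0) :
    w 0 ^ 2 = l0 * (1 + l * w (Fin.last (m + 1)) ^ (2 * d)) := by
  linear_combination eval_pderiv_zero_asympPoly.symm.trans h / 3

theorem pow_eq_of_eval_pderiv_succ_castSucc_asympPoly (hd : 1 ≤ d) {i : Fin m}
    (h : eval w (pderiv i.succ.castSucc (asympPoly m d l l0 li ln ln')) = 0) :
    w i.succ.castSucc ^ (3 * d - 1) = li i * (1 + l * w (Fin.last (m + 1)) ^ (3 * d - 1)) := by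
  have hd0 : (3 * d : ℂ) ≠ 0 := mul_ne_zero three_ne_zero (by exact_mod_cast (by omega : d ≠ 0))
  rw [eval_pderiv_succ_castSucc_asympPoly] at h
  exact sub_eq_zero.mp ((mul_eq_zero.mp h).resolve_left hd0)

theorem pow_eq_of_eval_pderiv_last_asympPoly (hd : 1 ≤ d)
    (h : eval w (pderiv (Fin.last (m + 1)) (asympPoly m d l l0 li ln ln')) = 0) :
    w (Fin.last (m + 1)) ^ (3 * d - 1) = ln + ln' * w (Fin.last (m + 1)) ^ (3 * d - 2)
      + l * (2 * (l0 * w 0) * w (Fin.last (m + 1)) ^ (2 * d - 1)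
        + (3 * d - 1) * (∑ i, li i * w i.succ.castSucc) * w (Fin.last (m + 1)) ^ (3 * d - 2)) := by
  have hd0 : (3 * d : ℂ) ≠ 0 := mul_ne_zero three_ne_zero (by exact_mod_cast (by omega : d ≠ 0))
  rw [eval_pderiv_last_asympPoly hd] at h
  linear_combination (mul_eq_zero.mp h).resolve_left hd0

theorem hessian_asympPoly_last_zero_mul_div
    (h : eval w (pderiv 0 (asympPoly m d l l0 li ln ln')) = 0) (hy : w 0 ≠ 0)
    (hP : 1 + l * w (Fin.last (m + 1)) ^ (2 * d) ≠ 0) :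
    hessian (asympPoly m d l l0 li ln ln') w (Fin.last (m + 1)) (0 : Fin (m + 1)).castSucc
      * hessian (asympPoly m d l l0 li ln ln') w (0 : Fin (m + 1)).castSucc (Fin.last (m + 1))
      / hessian (asympPoly m d l l0 li ln ln') w
          (0 : Fin (m + 1)).castSucc (0 : Fin (m + 1)).castSucc
      = 6 * l ^ 2 * d ^ 2 * (w (Fin.last (m + 1)) ^ (2 * d - 1)) ^ 2 * (l0 * w 0)
        / (1 + l * w (Fin.last (m + 1)) ^ (2 * d)) := by
  simp only [hessian, Matrix.of_apply, Fin.castSucc_zero]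
  rw [pderiv_comm 0, eval_pderiv_last_pderiv_zero_asympPoly,
    eval_pderiv_zero_pderiv_zero_asympPoly, div_eq_div_iff (by simpa) hP]
  linear_combination (-36 * l ^ 2 * d ^ 2 * (w (Fin.last (m + 1)) ^ (2 * d - 1)) ^ 2 * l0)
    * sq_eq_of_eval_pderiv_zero_asympPoly h

theorem hessian_asympPoly_last_succ_castSucc_mul_div (hd : 1 ≤ d) {i : Fin m}
    (h : eval w (pderiv i.succ.castSucc (asympPoly m d l l0 li ln ln')) = 0)
    (hx : w i.succ.castSucc ≠ 0) (hQ : 1 + l * w (Fin.last (m + 1)) ^ (3 * d - 1) ≠ 0) :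
    hessian (asympPoly m d l l0 li ln ln') w (Fin.last (m + 1)) i.succ.castSucc
      * hessian (asympPoly m d l l0 li ln ln') w i.succ.castSucc (Fin.last (m + 1))
      / hessian (asympPoly m d l l0 li ln ln') w i.succ.castSucc i.succ.castSucc
      = 3 * l ^ 2 * d * (3 * d - 1) * (w (Fin.last (m + 1)) ^ (3 * d - 2)) ^ 2
        * (li i * w i.succ.castSucc) / (1 + l * w (Fin.last (m + 1)) ^ (3 * d - 1)) := by
  have hxx : hessian (asympPoly m d l l0 li ln ln') w i.succ.castSucc i.succ.castSucc ≠ 0 :=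
    hessian_asympPoly_castSucc_self_ne_zero hd (j := i.succ) hx
  have hxp : w i.succ.castSucc ^ (3 * d - 1)
      = w i.succ.castSucc ^ (3 * d - 2) * w i.succ.castSucc := by
    rw [← pow_succ]; congr 1; omega
  simp only [hessian, Matrix.of_apply] at hxx ⊢
  rw [pderiv_comm i.succ.castSucc, eval_pderiv_last_pderiv_succ_castSucc_asympPoly hd,
    div_eq_div_iff hxx hQ, eval_pderiv_succ_castSucc_pderiv_succ_castSucc_asympPoly hd, if_pos rfl]
  linear_combination (9 * l ^ 2 * d ^ 2 * (3 * d - 1) ^ 2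
    * (w (Fin.last (m + 1)) ^ (3 * d - 2)) ^ 2 * li i)
      * (hxp - pow_eq_of_eval_pderiv_succ_castSucc_asympPoly hd h)

theorem arrowheadSchur_hessian_asympPoly (hd : 1 ≤ d)
    (hcrit : ∀ j, eval w (pderiv j (asympPoly m d l l0 li ln ln')) = 0)
    (hy : w 0 ≠ 0) (hx : ∀ i : Fin m, w i.succ.castSucc ≠ 0)
    (hP : 1 + l * w (Fin.last (m + 1)) ^ (2 * d) ≠ 0)
    (hQ : 1 + l * w (Fin.last (m + 1)) ^ (3 * d - 1) ≠ 0) :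
    (hessian (asympPoly m d l l0 li ln ln') w).arrowheadSchur * w (Fin.last (m + 1)) =
      asympSchur d l ln ln' (w (Fin.last (m + 1))) (l0 * w 0) (∑ i, li i * w i.succ.castSucc) := by
  rw [Matrix.arrowheadSchur, Fin.sum_univ_succ,
    hessian_asympPoly_last_zero_mul_div (hcrit 0) hy hP,
    sum_congr rfl fun i _ => hessian_asympPoly_last_succ_castSucc_mul_div hd (hcrit _) (hx i) hQ,
    ← sum_div, ← mul_sum]
  simp only [hessian, Matrix.of_apply]
  rw [eval_pderiv_last_pderiv_last_asympPoly hd]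
  linear_combination
    mul_eq_asympSchur hd hP hQ (pow_eq_of_eval_pderiv_last_asympPoly hd (hcrit (Fin.last (m + 1))))

end asympPoly

theorem Complex.ofReal_asympSchur (d : ℕ) (l ln ln' s a S : ℝ) :
    ((asympSchur d l ln ln' s a S : ℝ) : ℂ) = asympSchur d (l : ℂ) ln ln' s a S := by
  simp [asympSchur]

theorem asympPoly_no_degenerate_critical_points_general (m d : ℕ) (hd : 1 ≤ d)
    (l l0 : ℂ) (li : Fin m → ℂ) (ln ln' : ℂ)
    (hl : IsNonnegReal l) (hln : IsNonnegReal ln) (hln' : IsNonnegReal ln')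
    (hne : ¬(l = 0 ∧ ln = 0 ∧ ln' = 0))
    (w : Fin (m + 2) → ℂ)
    (hcrit : ∀ j, eval w (pderiv j (asympPoly m d l l0 li ln ln')) = 0)
    (hy : IsPosReal (l0 * w 0))
    (hx : ∀ i : Fin m, IsPosReal (li i * w i.succ.castSucc))
    (hxn : IsPosReal (w (Fin.last (m + 1)))) :
    IsUnit (Matrix.of fun j k : Fin (m + 2) =>
      eval w (pderiv j (pderiv k (asympPoly m d l l0 li ln ln')))) := by
  show IsUnit (hessian (asympPoly m d l l0 li ln ln') w)
  obtain ⟨l, hl, rfl⟩ := hl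
  obtain ⟨ln, hln, rfl⟩ := hln
  obtain ⟨ln', hln', rfl⟩ := hln'
  obtain ⟨a, ha, hwa⟩ := hy
  choose b hb hwb using hx
  obtain ⟨s, hs, hws⟩ := hxn
  have hy0 : w 0 ≠ 0 := right_ne_zero_of_mul (hwa ▸ Complex.ofReal_ne_zero.mpr ha.ne')
  have hx0 (i : Fin m) : w i.succ.castSucc ≠ 0 :=
    right_ne_zero_of_mul ((hwb i) ▸ Complex.ofReal_ne_zero.mpr (hb i).ne')
  have hP : 1 + (l : ℂ) * w (Fin.last (m + 1)) ^ (2 * d) ≠ 0 := by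
    rw [hws]; exact_mod_cast (by positivity : 0 < 1 + l * s ^ (2 * d)).ne'
  have hQ : 1 + (l : ℂ) * w (Fin.last (m + 1)) ^ (3 * d - 1) ≠ 0 := by
    rw [hws]; exact_mod_cast (by positivity : 0 < 1 + l * s ^ (3 * d - 1)).ne'
  have hschur := arrowheadSchur_hessian_asympPoly hd hcrit hy0 hx0 hP hQ
  simp only [hws, hwa, hwb, ← Complex.ofReal_sum, ← Complex.ofReal_asympSchur] at hschur
  have hpos := asympSchur_pos hd hl hln hln' (by exact_mod_cast hne) hs ha
    (sum_nonneg fun i _ => (hb i).le : 0 ≤ ∑ i, b i)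
  refine Matrix.isUnit_of_arrowhead (hessian_asympPoly_castSucc_castSucc_of_ne hd)
    (fun j => hessian_asympPoly_castSucc_self_ne_zero hd (Fin.cases hy0 hx0 j)) fun h0 => ?_
  rw [h0, zero_mul] at hschur
  exact hpos.ne (by exact_mod_cast hschur)

/-- if `λ, λ_n, λ'_n` are nonnegative real, not all three zero, and
`λ₀, λ₁, …, λ_{n−1}` are nonzero, then `f` has no degenerate critical point with
`λ₀y`, `λ_i x_i` and `x_n` positive real: at every such critical point the Hessian
matrix of `f` is invertible. -/
theorem asympPoly_no_degenerate_critical_points (m d : ℕ) (hd : 1 ≤ d)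
    (l l0 : ℂ) (li : Fin m → ℂ) (ln ln' : ℂ)
    (hl : IsNonnegReal l) (hln : IsNonnegReal ln) (hln' : IsNonnegReal ln')
    (hne : ¬(l = 0 ∧ ln = 0 ∧ ln' = 0))
    (hl0 : l0 ≠ 0) (hli : ∀ i, li i ≠ 0)
    (w : Fin (m + 2) → ℂ)
    (hcrit : ∀ j, eval w (pderiv j (asympPoly m d l l0 li ln ln')) = 0)
    (hy : IsPosReal (l0 * w 0))
    (hx : ∀ i : Fin m, IsPosReal (li i * w i.succ.castSucc))
    (hxn : IsPosReal (w (Fin.last (m + 1)))) :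
    IsUnit (Matrix.of fun j k : Fin (m + 2) =>
      eval w (pderiv j (pderiv k (asympPoly m d l l0 li ln ln')))) :=
  asympPoly_no_degenerate_critical_points_general m d hd l l0 li ln ln' hl hln hln' hne w hcrit hy
    hx hxn
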